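/- arXiv:1703.09215 — 7 statements merged into one kernel-verified Lean document; each statement's English description precedes it below -/
import Mathlib

section
/- Define the birational action of s_i (i mod 3) on parameters a_0,a_1,a_2 by s_i(a_i) = -a_i, s_i(a_{i±1}) = a_{i±1} + a_i, s_i(a_j) = a_j otherwise, and on variables f_0,f_1,f_2 by s_i(f_{i-1}) = f_{i-1} + 3a_i/f_i, s_i(f_{i+1}) = f_{i+1} - 3a_i/f_i, s_i(f_i) = f_i; define π(a_i) = a_{i+1}, π(f_i) = f_{i+1}. Then these actions satisfy s_i² = 1, (s_i s_{i±1})³ = 1, π s_i = s_{i+1} π, and π³ = 1 as birational transformations (i.e., as maps on the field of rational functions ℂ(a_0,a_1,a_2,f_0,f_1,f_2)). -/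
open MvPolynomial

/-- The field of rational functions `ℂ(a_0,a_1,a_2,f_0,f_1,f_2)`. -/
abbrev K9 : Type := FractionRing (MvPolynomial (Fin 6) ℂ)

/-- The parameter `a_i` as an element of `ℂ(a_0,a_1,a_2,f_0,f_1,f_2)`. -/
noncomputable def aV (i : Fin 3) : K9 :=
  algebraMap (MvPolynomial (Fin 6) ℂ) K9 (X (Fin.castAdd 3 i))

/-- The variable `f_i` as an element of `ℂ(a_0,a_1,a_2,f_0,f_1,f_2)`. -/
noncomputable def fV (i : Fin 3) : K9 :=
  algebraMap (MvPolynomial (Fin 6) ℂ) K9 (X (Fin.natAdd 3 i))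

/-
On generators `s_i` is given by polynomials in `a, f` and `1/f_i` and fixes `f_i`, so it is an
endomorphism of the localization `ℂ[a,f][1/f_i]`. Its formulas are formally involutive, so there
it is its own inverse; hence it is injective on `ℂ[a,f]` and extends to the fraction field, where
it is again an involution. `π` comes from a permutation of the variables. The relations
`π s_i = s_{i+1} π` and `π³ = 1` are checked on generators. Conjugation by `π` shifts the
indices, so the braid relations reduce to `s_0 s_1 s_0 = s_1 s_0 s_1`, a direct computation;
with `s_i² = 1` this gives `(s_i s_{i±1})³ = 1`.
-/

namespace PIV

local notation "R₆" => MvPolynomial (Fin 6) ℂ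

/-- `s_i(a_j) = a_j - A_{ij} a_i` with `A` the Cartan matrix of type `A_2^{(1)}`, whose entry
`A_{ij}` depends only on `j - i`. -/
def cartanCoeff : Fin 3 → ℤ := ![-2, 1, 1]

def shiftCoeff : Fin 3 → ℤ := ![0, -1, 1]

section GroupRelations

variable {G : Type*} [Group G]

theorem mul_pow_three_eq_one_of_braid {s t : G} (hs : s * s = 1) (ht : t * t = 1)
    (h : s * t * s = t * s * t) : (s * t) ^ 3 = 1 :=
  calc (s * t) ^ 3 = (s * t * s) * (t * s * t) := by
        simp only [pow_succ, pow_zero, one_mul, mul_assoc]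
    _ = (t * s * t) * (t * s * t) := by rw [h]
    _ = t * (s * (t * t) * s) * t := by group
    _ = 1 := by rw [ht, mul_one, hs, mul_one, ht]

theorem braid_of_braid_zero (s : Fin 3 → G) (p : G) (hp : ∀ i, p * s i = s (i + 1) * p)
    (h0 : s 0 * s 1 * s 0 = s 1 * s 0 * s 1) (i : Fin 3) :
    s i * s (i + 1) * s i = s (i + 1) * s i * s (i + 1) := by
  have hconj : ∀ i, MulAut.conj p (s i) = s (i + 1) := fun i => by
    rw [MulAut.conj_apply, hp, mul_inv_cancel_right]
  have step : ∀ i, s i * s (i + 1) * s i = s (i + 1) * s i * s (i + 1) →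
      s (i + 1) * s (i + 1 + 1) * s (i + 1) = s (i + 1 + 1) * s (i + 1) * s (i + 1 + 1) :=
    fun i hi => by simpa only [map_mul, hconj] using congrArg (MulAut.conj p) hi
  fin_cases i
  · exact h0
  · exact step 0 h0
  · exact step 1 (step 0 h0)

end GroupRelations

section Formulas

variable {T : Type*} [CommRing T]

def reflParam (a : Fin 3 → T) (i j : Fin 3) : T := a j + cartanCoeff (j - i) * a i

/-- `g` plays the role of `1 / f_i`, so that the formula makes sense in any commutative ring. -/
def reflVar (a f : Fin 3 → T) (g : T) (i j : Fin 3) : T :=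
  f j + shiftCoeff (j - i) * (3 * a i * g)

theorem reflParam_reflParam (a : Fin 3 → T) (i j : Fin 3) :
    reflParam (reflParam a i) i j = a j := by
  simp only [reflParam, sub_self]
  simp [cartanCoeff]
  ring

theorem reflVar_reflVar (a f : Fin 3 → T) (g : T) (i j : Fin 3) :
    reflVar (reflParam a i) (reflVar a f g i) g i j = f j := by
  simp only [reflVar, reflParam, sub_self]
  simp [cartanCoeff]
  ring

theorem map_reflParam {T' F : Type*} [CommRing T'] [FunLike F T T'] [RingHomClass F T T']
    (h : F) (a : Fin 3 → T) (i j : Fin 3) : h (reflParam a i j) = reflParam (h ∘ a) i j := by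
  simp [reflParam]

theorem map_reflVar {T' F : Type*} [CommRing T'] [FunLike F T T'] [RingHomClass F T T']
    (h : F) (a f : Fin 3 → T) (g : T) (i j : Fin 3) :
    h (reflVar a f g i j) = reflVar (h ∘ a) (h ∘ f) (h g) i j := by
  simp [reflVar, map_ofNat]

theorem reflParam_self (a : Fin 3 → T) (i : Fin 3) : reflParam a i i = -a i := by
  simp [reflParam, cartanCoeff]; ring

theorem reflParam_add_one (a : Fin 3 → T) (i : Fin 3) :
    reflParam a i (i + 1) = a (i + 1) + a i := by
  simp [reflParam, cartanCoeff]

theorem reflParam_add_two (a : Fin 3 → T) (i : Fin 3) :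
    reflParam a i (i + 2) = a (i + 2) + a i := by
  simp [reflParam, cartanCoeff]

theorem reflVar_self (a f : Fin 3 → T) (g : T) (i : Fin 3) : reflVar a f g i i = f i := by
  simp [reflVar, shiftCoeff]

theorem reflVar_add_one (a f : Fin 3 → T) (g : T) (i : Fin 3) :
    reflVar a f g i (i + 1) = f (i + 1) - 3 * a i * g := by
  simp [reflVar, shiftCoeff]; ring

theorem reflVar_add_two (a f : Fin 3 → T) (g : T) (i : Fin 3) :
    reflVar a f g i (i + 2) = f (i + 2) + 3 * a i * g := by
  simp [reflVar, shiftCoeff]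

theorem reflParam_rotate (a : Fin 3 → T) (i j : Fin 3) :
    reflParam (fun k => a (k + 1)) i j = reflParam a (i + 1) (j + 1) := by
  simp [reflParam]

theorem reflVar_rotate (a f : Fin 3 → T) (g : T) (i j : Fin 3) :
    reflVar (fun k => a (k + 1)) (fun k => f (k + 1)) g i j = reflVar a f g (i + 1) (j + 1) := by
  simp [reflVar]

end Formulas

section Substitution

theorem algHom_ext_fin_six {A : Type*} [Semiring A] [Algebra ℂ A]
    {φ ψ : R₆ →ₐ[ℂ] A}
    (ha : ∀ j : Fin 3, φ (X (Fin.castAdd 3 j)) = ψ (X (Fin.castAdd 3 j)))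
    (hf : ∀ j : Fin 3, φ (X (Fin.natAdd 3 j)) = ψ (X (Fin.natAdd 3 j))) : φ = ψ :=
  MvPolynomial.algHom_ext fun v => Fin.addCases (m := 3) (n := 3) ha hf v

variable {T : Type*} [CommRing T] [Algebra ℂ T]

noncomputable def reflHom (a f : Fin 3 → T) (g : T) (i : Fin 3) :
    R₆ →ₐ[ℂ] T :=
  aeval (Fin.append (reflParam a i) (reflVar a f g i))

theorem reflHom_X_castAdd (a f : Fin 3 → T) (g : T) (i j : Fin 3) :
    reflHom a f g i (X (Fin.castAdd 3 j)) = reflParam a i j := by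
  rw [reflHom, aeval_X, Fin.append_left]

theorem reflHom_X_natAdd (a f : Fin 3 → T) (g : T) (i j : Fin 3) :
    reflHom a f g i (X (Fin.natAdd 3 j)) = reflVar a f g i j := by
  rw [reflHom, aeval_X, Fin.append_right]

theorem comp_reflHom {T' : Type*} [CommRing T'] [Algebra ℂ T'] (h : T →ₐ[ℂ] T')
    (a f : Fin 3 → T) (g : T) (i : Fin 3) :
    h.comp (reflHom a f g i) = reflHom (h ∘ a) (h ∘ f) (h g) i :=
  algHom_ext_fin_six
    (fun j => by simp only [AlgHom.comp_apply, reflHom_X_castAdd, map_reflParam])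
    (fun j => by simp only [AlgHom.comp_apply, reflHom_X_natAdd, map_reflVar])

theorem reflHom_reflHom (a f : Fin 3 → T) (g : T) (i : Fin 3) :
    reflHom (reflParam a i) (reflVar a f g i) g i = aeval (Fin.append a f) :=
  algHom_ext_fin_six
    (fun j => by rw [reflHom_X_castAdd, reflParam_reflParam, aeval_X, Fin.append_left])
    (fun j => by rw [reflHom_X_natAdd, reflVar_reflVar, aeval_X, Fin.append_right])

variable (T) [Algebra R₆ T] [IsScalarTower ℂ R₆ T]

noncomputable def paramGen (j : Fin 3) : T :=
  algebraMap R₆ T (X (Fin.castAdd 3 j))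

noncomputable def varGen (j : Fin 3) : T :=
  algebraMap R₆ T (X (Fin.natAdd 3 j))

theorem aeval_append_paramGen_varGen :
    aeval (Fin.append (paramGen T) (varGen T))
      = IsScalarTower.toAlgHom ℂ R₆ T :=
  algHom_ext_fin_six (fun j => by rw [aeval_X, Fin.append_left]; rfl)
    (fun j => by rw [aeval_X, Fin.append_right]; rfl)

variable {T}

theorem comp_reflHom_of_extends {g : T} {i : Fin 3} (h : T →ₐ[ℂ] T)
    (hh : h.comp (IsScalarTower.toAlgHom ℂ _ T) = reflHom (paramGen T) (varGen T) g i)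
    (hg : h g = g) :
    h.comp (reflHom (paramGen T) (varGen T) g i)
      = IsScalarTower.toAlgHom ℂ R₆ T := by
  have ha : h ∘ paramGen T = reflParam (paramGen T) i := funext fun j =>
    (AlgHom.congr_fun hh _).trans (reflHom_X_castAdd _ _ _ _ _)
  have hf : h ∘ varGen T = reflVar (paramGen T) (varGen T) g i := funext fun j =>
    (AlgHom.congr_fun hh _).trans (reflHom_X_natAdd _ _ _ _ _)
  rw [comp_reflHom, ha, hf, hg, reflHom_reflHom, aeval_append_paramGen_varGen]

end Substitution

section Away

variable (i : Fin 3)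

abbrev AwayVar : Type := Localization.Away (X (Fin.natAdd 3 i) : R₆)

theorem algebraMap_awayVar_injective : Function.Injective (algebraMap R₆ (AwayVar i)) :=
  IsLocalization.injective (AwayVar i)
    (powers_le_nonZeroDivisors_of_noZeroDivisors (X_ne_zero (Fin.natAdd 3 i)))

noncomputable def reflAway : R₆ →ₐ[ℂ] AwayVar i :=
  reflHom (paramGen (AwayVar i)) (varGen (AwayVar i))
    (IsLocalization.Away.invSelf (S := AwayVar i) (X (Fin.natAdd 3 i) : R₆)) i

theorem reflAway_injective : Function.Injective (reflAway i) := by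
  set x : R₆ := X (Fin.natAdd 3 i)
  have hx : reflAway i x = algebraMap R₆ (AwayVar i) x := by
    rw [reflAway, reflHom_X_natAdd, reflVar_self]; rfl
  have hu : IsUnit (reflAway i x) := hx ▸ IsLocalization.Away.algebraMap_isUnit x
  let B : AwayVar i →ₐ[ℂ] AwayVar i := IsLocalization.Away.liftAlgHom x hu
  have hB : B.comp (IsScalarTower.toAlgHom ℂ _ (AwayVar i)) = reflAway i :=
    AlgHom.ext fun p => by
      simp only [AlgHom.comp_apply, IsScalarTower.coe_toAlgHom', B,
        IsLocalization.Away.coe_liftAlgHom, IsLocalization.Away.lift_eq]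
      rfl
  have hinv : B (IsLocalization.Away.invSelf x) = IsLocalization.Away.invSelf x := by
    refine (IsLocalization.Away.algebraMap_isUnit (S := AwayVar i) x).mul_left_cancel ?_
    rw [IsLocalization.Away.mul_invSelf, ← hx, ← AlgHom.congr_fun hB x, AlgHom.comp_apply,
      IsScalarTower.coe_toAlgHom', ← map_mul, IsLocalization.Away.mul_invSelf, map_one]
  have hBB : B.comp (reflAway i) = IsScalarTower.toAlgHom ℂ R₆ (AwayVar i) :=
    comp_reflHom_of_extends B hB hinv
  intro p q hpq
  apply algebraMap_awayVar_injective i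
  have := congrArg B hpq
  rwa [← AlgHom.comp_apply, ← AlgHom.comp_apply, hBB] at this

end Away

section Field

theorem algHom_ext_K9 {A : Type*} [Semiring A] [Algebra ℂ A] {φ ψ : K9 →ₐ[ℂ] A}
    (ha : ∀ j, φ (aV j) = ψ (aV j)) (hf : ∀ j, φ (fV j) = ψ (fV j)) : φ = ψ :=
  IsLocalization.algHom_ext (nonZeroDivisors R₆) (algHom_ext_fin_six ha hf)

theorem map_algebraMap_C (e : K9 ≃ₐ[ℂ] K9) (c : ℂ) :
    e (algebraMap R₆ K9 (C c)) = algebraMap R₆ K9 (C c) := by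
  rw [← MvPolynomial.algebraMap_eq, ← IsScalarTower.algebraMap_apply, AlgEquiv.commutes]

theorem fV_ne_zero (i : Fin 3) : fV i ≠ 0 :=
  (map_ne_zero_iff _ (IsFractionRing.injective R₆ K9)).2 (X_ne_zero _)

noncomputable def reflPoly (i : Fin 3) : R₆ →ₐ[ℂ] K9 := reflHom aV fV (fV i)⁻¹ i

theorem reflPoly_injective (i : Fin 3) : Function.Injective (reflPoly i) := by
  set x : R₆ := X (Fin.natAdd 3 i)
  have hu : IsUnit (IsScalarTower.toAlgHom ℂ R₆ K9 x) := (fV_ne_zero i).isUnit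
  let J : AwayVar i →ₐ[ℂ] K9 := IsLocalization.Away.liftAlgHom x hu
  have hJ : ∀ p, J (algebraMap R₆ (AwayVar i) p) = algebraMap R₆ K9 p :=
    IsLocalization.Away.lift_eq x hu
  have hJ_inj : Function.Injective J :=
    (IsLocalization.injective_iff_map_algebraMap_eq (Submonoid.powers x) J.toRingHom).2
      fun p q => by
        simp only [AlgHom.toRingHom_eq_coe, RingHom.coe_coe, hJ]
        exact (algebraMap_awayVar_injective i).eq_iff.trans
          (IsFractionRing.injective R₆ K9).eq_iff.symm
  have hJ_inv : J (IsLocalization.Away.invSelf x) = (fV i)⁻¹ := by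
    refine eq_inv_of_mul_eq_one_right ?_
    rw [fV, ← hJ, ← map_mul, IsLocalization.Away.mul_invSelf, map_one]
  have hcomp : J.comp (reflAway i) = reflPoly i := by
    rw [reflAway, comp_reflHom, hJ_inv]
    congr 1 <;> exact funext fun j => hJ _
  rw [← hcomp]
  exact hJ_inj.comp (reflAway_injective i)

noncomputable def reflFrac (i : Fin 3) : K9 →ₐ[ℂ] K9 :=
  IsFractionRing.liftAlgHom (reflPoly_injective i)

theorem reflFrac_comp_algebraMap (i : Fin 3) :
    (reflFrac i).comp (IsScalarTower.toAlgHom ℂ R₆ K9) = reflPoly i :=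
  AlgHom.ext fun p => by
    simp only [AlgHom.comp_apply, IsScalarTower.coe_toAlgHom', reflFrac,
      IsFractionRing.coe_liftAlgHom, IsFractionRing.lift_algebraMap]
    rfl

theorem reflFrac_aV (i j : Fin 3) : reflFrac i (aV j) = reflParam aV i j :=
  (AlgHom.congr_fun (reflFrac_comp_algebraMap i) _).trans (reflHom_X_castAdd _ _ _ _ _)

theorem reflFrac_fV (i j : Fin 3) : reflFrac i (fV j) = reflVar aV fV (fV i)⁻¹ i j :=
  (AlgHom.congr_fun (reflFrac_comp_algebraMap i) _).trans (reflHom_X_natAdd _ _ _ _ _)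

theorem reflFrac_comp_self (i : Fin 3) : (reflFrac i).comp (reflFrac i) = AlgHom.id ℂ K9 := by
  have hg : reflFrac i (fV i)⁻¹ = (fV i)⁻¹ := by rw [map_inv₀, reflFrac_fV, reflVar_self]
  apply IsLocalization.algHom_ext (nonZeroDivisors R₆)
  rw [AlgHom.comp_assoc]
  exact (congrArg _ (reflFrac_comp_algebraMap i)).trans
    (comp_reflHom_of_extends (reflFrac i) (reflFrac_comp_algebraMap i) hg)

theorem reflFrac_aV_self (i : Fin 3) : reflFrac i (aV i) = -aV i := by
  rw [reflFrac_aV, reflParam_self]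

theorem reflFrac_aV_add_one (i : Fin 3) : reflFrac i (aV (i + 1)) = aV (i + 1) + aV i := by
  rw [reflFrac_aV, reflParam_add_one]

theorem reflFrac_aV_add_two (i : Fin 3) : reflFrac i (aV (i + 2)) = aV (i + 2) + aV i := by
  rw [reflFrac_aV, reflParam_add_two]

theorem reflFrac_fV_self (i : Fin 3) : reflFrac i (fV i) = fV i := by
  rw [reflFrac_fV, reflVar_self]

theorem reflFrac_fV_add_one (i : Fin 3) :
    reflFrac i (fV (i + 1)) = fV (i + 1) - 3 * aV i / fV i := by
  rw [reflFrac_fV, reflVar_add_one, ← div_eq_mul_inv]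

theorem reflFrac_fV_add_two (i : Fin 3) :
    reflFrac i (fV (i + 2)) = fV (i + 2) + 3 * aV i / fV i := by
  rw [reflFrac_fV, reflVar_add_two, ← div_eq_mul_inv]

theorem reflFrac_braid_zero_aV (j : Fin 3) :
    reflFrac 0 (reflFrac 1 (reflFrac 0 (aV j))) = reflFrac 1 (reflFrac 0 (reflFrac 1 (aV j))) := by
  have sa0 : reflFrac 0 (aV 0) = -aV 0 := reflFrac_aV_self 0
  have sa1 : reflFrac 0 (aV 1) = aV 1 + aV 0 := reflFrac_aV_add_one 0
  have sa2 : reflFrac 0 (aV 2) = aV 2 + aV 0 := reflFrac_aV_add_two 0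
  have ta0 : reflFrac 1 (aV 0) = aV 0 + aV 1 := reflFrac_aV_add_two 1
  have ta1 : reflFrac 1 (aV 1) = -aV 1 := reflFrac_aV_self 1
  have ta2 : reflFrac 1 (aV 2) = aV 2 + aV 1 := reflFrac_aV_add_one 1
  fin_cases j <;>
    simp only [Fin.reduceFinMk, map_add, map_neg, sa0, sa1, sa2, ta0, ta1, ta2] <;> ring

theorem reflFrac_braid_zero_fV (j : Fin 3) :
    reflFrac 0 (reflFrac 1 (reflFrac 0 (fV j))) = reflFrac 1 (reflFrac 0 (reflFrac 1 (fV j))) := by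
  set s := reflFrac 0
  set t := reflFrac 1
  have sa0 : s (aV 0) = -aV 0 := reflFrac_aV_self 0
  have sa1 : s (aV 1) = aV 1 + aV 0 := reflFrac_aV_add_one 0
  have ta0 : t (aV 0) = aV 0 + aV 1 := reflFrac_aV_add_two 1
  have ta1 : t (aV 1) = -aV 1 := reflFrac_aV_self 1
  have sf0 : s (fV 0) = fV 0 := reflFrac_fV_self 0
  have sf1 : s (fV 1) = fV 1 - 3 * aV 0 / fV 0 := reflFrac_fV_add_one 0
  have sf2 : s (fV 2) = fV 2 + 3 * aV 0 / fV 0 := reflFrac_fV_add_two 0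
  have tf0 : t (fV 0) = fV 0 + 3 * aV 1 / fV 1 := reflFrac_fV_add_two 1
  have tf1 : t (fV 1) = fV 1 := reflFrac_fV_self 1
  have tf2 : t (fV 2) = fV 2 - 3 * aV 1 / fV 1 := reflFrac_fV_add_one 1
  have h0 := fV_ne_zero 0
  have h1 := fV_ne_zero 1
  -- `s` swaps `u` and `f_0 f_1` and fixes `v`, `t` swaps `v` and `f_0 f_1` and fixes `u`:
  -- written through `u` and `v`, all denominators are products of `f_0, f_1, u, v`.
  obtain ⟨u, hu⟩ : ∃ u, u = fV 0 * fV 1 - 3 * aV 0 := ⟨_, rfl⟩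
  obtain ⟨v, hv⟩ : ∃ v, v = fV 0 * fV 1 + 3 * aV 1 := ⟨_, rfl⟩
  have sf1' : s (fV 1) = u / fV 0 := by rw [sf1, hu]; field_simp
  have tf0' : t (fV 0) = v / fV 1 := by rw [tf0, hv]; field_simp
  have u_ne : u ≠ 0 := by
    rw [← mul_div_cancel₀ u h0, ← sf1']
    exact mul_ne_zero h0 ((map_ne_zero s).2 h1)
  have v_ne : v ≠ 0 := by
    rw [← mul_div_cancel₀ v h1, ← tf0']
    exact mul_ne_zero h1 ((map_ne_zero t).2 h0)
  have su : s u = fV 0 * fV 1 := by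
    rw [hu, map_sub, map_mul, map_mul, map_ofNat, sf0, sf1, sa0]; field_simp; ring
  have sv : s v = v := by
    rw [hv, map_add, map_mul, map_mul, map_ofNat, sf0, sf1, sa1]; field_simp; ring
  have tu : t u = u := by
    rw [hu, map_sub, map_mul, map_mul, map_ofNat, tf0, tf1, ta0]; field_simp; ring
  have tv : t v = fV 0 * fV 1 := by
    rw [hv, map_add, map_mul, map_mul, map_ofNat, tf0, tf1, ta1]; field_simp; ring
  fin_cases j <;>
    simp only [Fin.reduceFinMk, map_add, map_sub, map_mul, map_div₀, map_ofNat, sa0, sa1, ta0,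
      ta1, sf0, sf1', sf2, tf0', tf1, tf2, su, sv, tu, tv]
  all_goals field_simp
  subst hu hv
  ring

theorem reflFrac_braid_zero :
    (reflFrac 0).comp ((reflFrac 1).comp (reflFrac 0))
      = (reflFrac 1).comp ((reflFrac 0).comp (reflFrac 1)) :=
  algHom_ext_K9 reflFrac_braid_zero_aV reflFrac_braid_zero_fV

def rotIndex : Fin 6 → Fin 6 :=
  Fin.append (fun j : Fin 3 => Fin.castAdd 3 (j + 1)) (fun j : Fin 3 => Fin.natAdd 3 (j + 1))

theorem rotIndex_injective : Function.Injective rotIndex := by decide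

noncomputable def rotPoly : R₆ →ₐ[ℂ] K9 :=
  (IsScalarTower.toAlgHom ℂ R₆ K9).comp (rename rotIndex)

theorem rotPoly_injective : Function.Injective rotPoly :=
  (IsFractionRing.injective R₆ K9).comp (rename_injective _ rotIndex_injective)

noncomputable def rotFrac : K9 →ₐ[ℂ] K9 := IsFractionRing.liftAlgHom rotPoly_injective

theorem rotFrac_algebraMap_X (v : Fin 6) :
    rotFrac (algebraMap R₆ K9 (X v)) = algebraMap R₆ K9 (X (rotIndex v)) := by
  simp only [rotFrac, IsFractionRing.coe_liftAlgHom, IsFractionRing.lift_algebraMap]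
  simp [rotPoly]

theorem rotFrac_aV (j : Fin 3) : rotFrac (aV j) = aV (j + 1) := by
  rw [aV, rotFrac_algebraMap_X, rotIndex, Fin.append_left]; rfl

theorem rotFrac_fV (j : Fin 3) : rotFrac (fV j) = fV (j + 1) := by
  rw [fV, rotFrac_algebraMap_X, rotIndex, Fin.append_right]; rfl

theorem rotFrac_comp_rotFrac_comp_rotFrac :
    rotFrac.comp (rotFrac.comp rotFrac) = AlgHom.id ℂ K9 := by
  have h3 : ∀ j : Fin 3, j + 1 + 1 + 1 = j := by decide
  exact algHom_ext_K9 (fun j => by simp [rotFrac_aV, h3]) (fun j => by simp [rotFrac_fV, h3])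

noncomputable def rotation : K9 ≃ₐ[ℂ] K9 :=
  AlgEquiv.ofAlgHom rotFrac (rotFrac.comp rotFrac) rotFrac_comp_rotFrac_comp_rotFrac
    (by rw [AlgHom.comp_assoc]; exact rotFrac_comp_rotFrac_comp_rotFrac)

theorem rotFrac_comp_reflFrac (i : Fin 3) :
    rotFrac.comp (reflFrac i) = (reflFrac (i + 1)).comp rotFrac := by
  have ha : ⇑rotFrac ∘ aV = fun k => aV (k + 1) := funext rotFrac_aV
  have hf : ⇑rotFrac ∘ fV = fun k => fV (k + 1) := funext rotFrac_fV
  refine algHom_ext_K9 (fun j => ?_) (fun j => ?_)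
  · simp only [AlgHom.comp_apply, reflFrac_aV, rotFrac_aV, map_reflParam, ha, reflParam_rotate]
  · simp only [AlgHom.comp_apply, reflFrac_fV, rotFrac_fV, map_reflVar, map_inv₀, ha, hf,
      reflVar_rotate]

noncomputable def reflection (i : Fin 3) : K9 ≃ₐ[ℂ] K9 :=
  AlgEquiv.ofAlgHom (reflFrac i) (reflFrac i) (reflFrac_comp_self i) (reflFrac_comp_self i)

theorem reflection_mul_self (i : Fin 3) : reflection i * reflection i = 1 :=
  AlgEquiv.ext fun x => AlgHom.congr_fun (reflFrac_comp_self i) x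

theorem rotation_mul_reflection (i : Fin 3) :
    rotation * reflection i = reflection (i + 1) * rotation :=
  AlgEquiv.ext fun x => AlgHom.congr_fun (rotFrac_comp_reflFrac i) x

theorem rotation_pow_three : rotation ^ 3 = 1 :=
  AlgEquiv.ext fun x => by
    rw [pow_succ, pow_two, AlgEquiv.mul_apply, AlgEquiv.mul_apply, AlgEquiv.one_apply]
    exact AlgHom.congr_fun rotFrac_comp_rotFrac_comp_rotFrac x

theorem reflection_braid (i : Fin 3) :
    reflection i * reflection (i + 1) * reflection i
      = reflection (i + 1) * reflection i * reflection (i + 1) :=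
  braid_of_braid_zero reflection rotation rotation_mul_reflection
    (AlgEquiv.ext fun x => AlgHom.congr_fun reflFrac_braid_zero x) i

theorem reflection_mul_reflection_add_one_pow_three (i : Fin 3) :
    (reflection i * reflection (i + 1)) ^ 3 = 1 :=
  mul_pow_three_eq_one_of_braid (reflection_mul_self i) (reflection_mul_self (i + 1))
    (reflection_braid i)

theorem reflection_mul_reflection_add_two_pow_three (i : Fin 3) :
    (reflection i * reflection (i + 2)) ^ 3 = 1 := by
  have h := reflection_braid (i + 2)
  rw [show i + 2 + 1 = i by fin_cases i <;> rfl] at h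
  exact mul_pow_three_eq_one_of_braid (reflection_mul_self i) (reflection_mul_self (i + 2)) h.symm

end Field

end PIV

/-- the birational actions `s_0, s_1, s_2, π` for P_IV, defined on the
generators by `s_i(a_i) = -a_i`, `s_i(a_{i±1}) = a_{i±1} + a_i`,
`s_i(f_{i+1}) = f_{i+1} - 3a_i/f_i`, `s_i(f_{i+2}) = f_{i+2} + 3a_i/f_i`,
`s_i(f_i) = f_i`, `π(a_i) = a_{i+1}`, `π(f_i) = f_{i+1}` (indices mod 3), exist as
field automorphisms of `ℂ(a_0,a_1,a_2,f_0,f_1,f_2)` fixing `ℂ`, and satisfy the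
fundamental relations `s_i² = 1`, `(s_i s_{i±1})³ = 1`, `π s_i = s_{i+1} π`, `π³ = 1`
of the extended affine Weyl group of type `A_2^{(1)}`. -/
theorem pIV_birational_weyl_relations :
    ∃ (s : Fin 3 → (K9 ≃+* K9)) (p : K9 ≃+* K9),
      (∀ (i : Fin 3) (c : ℂ),
        s i (algebraMap (MvPolynomial (Fin 6) ℂ) K9 (C c))
          = algebraMap (MvPolynomial (Fin 6) ℂ) K9 (C c)) ∧
      (∀ c : ℂ,
        p (algebraMap (MvPolynomial (Fin 6) ℂ) K9 (C c))
          = algebraMap (MvPolynomial (Fin 6) ℂ) K9 (C c)) ∧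
      (∀ i : Fin 3, s i (aV i) = -aV i) ∧
      (∀ i : Fin 3, s i (aV (i + 1)) = aV (i + 1) + aV i) ∧
      (∀ i : Fin 3, s i (aV (i + 2)) = aV (i + 2) + aV i) ∧
      (∀ i : Fin 3, s i (fV i) = fV i) ∧
      (∀ i : Fin 3, s i (fV (i + 1)) = fV (i + 1) - 3 * aV i / fV i) ∧
      (∀ i : Fin 3, s i (fV (i + 2)) = fV (i + 2) + 3 * aV i / fV i) ∧
      (∀ i : Fin 3, p (aV i) = aV (i + 1)) ∧
      (∀ i : Fin 3, p (fV i) = fV (i + 1)) ∧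
      (∀ (i : Fin 3) (x : K9), s i (s i x) = x) ∧
      (∀ (i : Fin 3) (x : K9),
        s i (s (i + 1) (s i (s (i + 1) (s i (s (i + 1) x))))) = x) ∧
      (∀ (i : Fin 3) (x : K9),
        s i (s (i + 2) (s i (s (i + 2) (s i (s (i + 2) x))))) = x) ∧
      (∀ (i : Fin 3) (x : K9), p (s i x) = s (i + 1) (p x)) ∧
      (∀ x : K9, p (p (p x)) = x) := by
  refine ⟨fun i => PIV.reflection i, PIV.rotation, fun i => PIV.map_algebraMap_C _,
    PIV.map_algebraMap_C _, PIV.reflFrac_aV_self, PIV.reflFrac_aV_add_one,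
    PIV.reflFrac_aV_add_two, PIV.reflFrac_fV_self, PIV.reflFrac_fV_add_one,
    PIV.reflFrac_fV_add_two, PIV.rotFrac_aV, PIV.rotFrac_fV, fun i x => ?_, fun i x => ?_,
    fun i x => ?_, fun i x => ?_, fun x => ?_⟩ <;>
  simp only [AlgEquiv.coe_ringEquiv]
  · exact DFunLike.congr_fun (PIV.reflection_mul_self i) x
  · simpa [pow_succ] using DFunLike.congr_fun (PIV.reflection_mul_reflection_add_one_pow_three i) x
  · simpa [pow_succ] using DFunLike.congr_fun (PIV.reflection_mul_reflection_add_two_pow_three i) x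
  · exact DFunLike.congr_fun (PIV.rotation_mul_reflection i) x
  · simpa [pow_succ] using DFunLike.congr_fun PIV.rotation_pow_three x
end

section
/- If ω_0, ..., ω_n satisfy the system ω_i' + ω_{i+1}' = -(ω_i - ω_{i+1})(ω_i - ω_{i+1} - t) - Σ_{k=1}^{n} (n+1-k) a_{i+k} (indices mod n+1), then the variables g_i := ω_i - ω_{i+1} - t/2 satisfy the periodic dressing chain with period n+1: g_{i+1}' + g_i' = g_{i+1}² - g_i² - (n+1) a_{i+1}. -/
/-!
Subtracting the equation of the system at `i` from the one at `i + 1` gives, for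
`g_i = ω_i - ω_{i+1} - t/2`, the identity `g_{i+1}' + g_i' = g_{i+1}² - g_i² + S_i - S_{i+1}`
with `S_i = Σ_{k=1}^{n} (n+1-k) a_{i+k}` (`tailWeightedSum a i`), so everything reduces to
`S_{i+1} - S_i = 1 - (n+1) a_{i+1}`. Adding the term `k = 0` turns `S_i` into
`T_i = Σ_{k=0}^{n} (n+1-k) a_{i+k}`, a sum of partial sums of `a_i, a_{i+1}, …`; shifting each
partial sum by one index changes it by `a_{i+k+1} - a_i`, so `T_{i+1} - T_i = Σ_j a_j - (n+1) a_i`.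
-/

open Finset

section WeightedSums

variable {R : Type*} [CommRing R]

theorem sum_range_succ_tsub_mul (f : ℕ → R) (m : ℕ) :
    ∑ k ∈ range (m + 1), ((m + 1 - k : ℕ) : R) * f k
      = ∑ k ∈ range m, ((m - k : ℕ) : R) * f k + ∑ k ∈ range (m + 1), f k := by
  have hcoeff : ∀ k ∈ range m, ((m + 1 - k : ℕ) : R) * f k = ((m - k : ℕ) : R) * f k + f k := by
    intro k hk
    rw [Nat.sub_add_comm (mem_range.mp hk).le]
    push_cast
    rw [add_mul, one_mul]
  rw [sum_range_succ, sum_congr rfl hcoeff, sum_add_distrib, sum_range_succ _ m]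
  simp only [Nat.add_sub_cancel_left, Nat.cast_one, one_mul]
  abel

theorem sum_range_tsub_mul_succ_sub (b : ℕ → R) (m : ℕ) :
    ∑ k ∈ range m, ((m - k : ℕ) : R) * b (k + 1) - ∑ k ∈ range m, ((m - k : ℕ) : R) * b k
      = ∑ k ∈ range m, b (k + 1) - m * b 0 := by
  induction m with
  | zero => simp
  | succ m ih =>
    rw [sum_range_succ_tsub_mul (fun k => b (k + 1)), sum_range_succ_tsub_mul b,
      sum_range_succ' b m, Nat.cast_succ]
    linear_combination ih

end WeightedSums

section Cyclic

variable {R : Type*} [CommRing R] {n : ℕ}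

theorem Fin.ofNat_succ (k : ℕ) : Fin.ofNat (n + 1) (k + 1) = Fin.ofNat (n + 1) k + 1 := by
  ext
  simp [Fin.val_add]

theorem sum_range_add_ofNat (a : Fin (n + 1) → R) (i : Fin (n + 1)) :
    ∑ k ∈ range (n + 1), a (i + Fin.ofNat (n + 1) k) = ∑ j, a j := by
  rw [← Fin.sum_univ_eq_sum_range (fun k => a (i + Fin.ofNat (n + 1) k))]
  simp only [Fin.ofNat_val_eq_self]
  exact Fintype.sum_equiv (Equiv.addLeft i) _ _ fun _ => rfl

def tailWeightedSum (a : Fin (n + 1) → R) (i : Fin (n + 1)) : R :=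
  ∑ k ∈ Icc 1 n, ((n + 1 - k : ℕ) : R) * a (i + Fin.ofNat (n + 1) k)

theorem tailWeightedSum_eq (a : Fin (n + 1) → R) (i : Fin (n + 1)) :
    tailWeightedSum a i
      = ∑ k ∈ range (n + 1), ((n + 1 - k : ℕ) : R) * a (i + Fin.ofNat (n + 1) k)
        - (n + 1) * a i := by
  rw [range_eq_Ico, sum_eq_sum_Ico_succ_bot (Nat.zero_lt_succ n), tailWeightedSum,
    ← Ico_add_one_right_eq_Icc]
  simp

theorem tailWeightedSum_succ_sub (a : Fin (n + 1) → R) (i : Fin (n + 1)) :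
    tailWeightedSum a (i + 1) - tailWeightedSum a i = ∑ j, a j - (n + 1) * a (i + 1) := by
  have hshift : ∀ k, a (i + 1 + Fin.ofNat (n + 1) k) = a (i + Fin.ofNat (n + 1) (k + 1)) := by
    intro k
    rw [Fin.ofNat_succ, add_right_comm, add_assoc]
  have key := sum_range_tsub_mul_succ_sub (fun k => a (i + Fin.ofNat (n + 1) k)) (n + 1)
  simp only [← hshift, sum_range_add_ofNat] at key
  simp only [Nat.cast_succ, Fin.ofNat_zero, add_zero] at key
  rw [tailWeightedSum_eq, tailWeightedSum_eq]
  linear_combination key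

end Cyclic

theorem dressing_chain_reduction_general (n : ℕ)
    (ω : Fin (n + 1) → ℂ → ℂ) (dω : Fin (n + 1) → ℂ → ℂ) (a : Fin (n + 1) → ℂ)
    (ha : ∑ i : Fin (n + 1), a i = 1)
    (hd : ∀ (i : Fin (n + 1)) (t : ℂ), HasDerivAt (ω i) (dω i t) t)
    (hsys : ∀ (i : Fin (n + 1)) (t : ℂ),
      dω i t + dω (i + 1) t
        = -(ω i t - ω (i + 1) t) * (ω i t - ω (i + 1) t - t)
          - ∑ k ∈ Icc 1 n, ((n + 1 - k : ℕ) : ℂ) * a (i + Fin.ofNat (n + 1) k)) :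
    ∀ (i : Fin (n + 1)) (t : ℂ),
      HasDerivAt
        (fun u => (ω (i + 1) u - ω (i + 2) u - u / 2) + (ω i u - ω (i + 1) u - u / 2))
        ((ω (i + 1) t - ω (i + 2) t - t / 2) ^ 2 - (ω i t - ω (i + 1) t - t / 2) ^ 2
          - ((n : ℂ) + 1) * a (i + 1)) t := by
  intro i t
  have hi : i + 1 + 1 = i + 2 := by
    ext
    simp [Fin.val_add]
  have hsys_i := hsys i t
  have hsys_succ := hsys (i + 1) t
  rw [hi] at hsys_succ
  have hconst := tailWeightedSum_succ_sub a i
  rw [ha] at hconst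
  have hderiv := (((hd (i + 1) t).sub (hd (i + 2) t)).sub ((hasDerivAt_id t).div_const 2)).add
    (((hd i t).sub (hd (i + 1) t)).sub ((hasDerivAt_id t).div_const 2))
  refine hderiv.congr_deriv ?_
  unfold tailWeightedSum at hconst
  linear_combination hsys_i - hsys_succ + hconst

/-- if `ω_0, …, ω_n` satisfy
`ω_i' + ω_{i+1}' = -(ω_i - ω_{i+1})(ω_i - ω_{i+1} - t) - Σ_{k=1}^{n} (n+1-k) a_{i+k}`
(indices mod `n+1`), then `g_i := ω_i - ω_{i+1} - t/2` satisfy the periodic dressing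
chain with period `n+1`: `g_{i+1}' + g_i' = g_{i+1}² - g_i² - (n+1) a_{i+1}`. -/
theorem dressing_chain_reduction (n : ℕ) (hn : 2 ≤ n)
    (ω : Fin (n + 1) → ℂ → ℂ) (dω : Fin (n + 1) → ℂ → ℂ) (a : Fin (n + 1) → ℂ)
    (ha : ∑ i : Fin (n + 1), a i = 1)
    (hd : ∀ (i : Fin (n + 1)) (t : ℂ), HasDerivAt (ω i) (dω i t) t)
    (hsys : ∀ (i : Fin (n + 1)) (t : ℂ),
      dω i t + dω (i + 1) t
        = -(ω i t - ω (i + 1) t) * (ω i t - ω (i + 1) t - t)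
          - ∑ k ∈ Icc 1 n, ((n + 1 - k : ℕ) : ℂ) * a (i + Fin.ofNat (n + 1) k)) :
    ∀ (i : Fin (n + 1)) (t : ℂ),
      HasDerivAt
        (fun u => (ω (i + 1) u - ω (i + 2) u - u / 2) + (ω i u - ω (i + 1) u - u / 2))
        ((ω (i + 1) t - ω (i + 2) t - t / 2) ^ 2 - (ω i t - ω (i + 1) t - t / 2) ^ 2
          - ((n : ℂ) + 1) * a (i + 1)) t :=
  dressing_chain_reduction_general n ω dω a ha hd hsys
end

section
/- For n = 2, if ω_0, ω_1, ω_2 satisfy ω_i' + ω_{i+1}' = -(ω_i - ω_{i+1})(ω_i - ω_{i+1} - t) - (2a_{i+1} + a_{i+2}) (indices mod 3) with a_0 + a_1 + a_2 = 1, then f_0 := ω_1 - ω_2 + t, f_1 := ω_2 - ω_0 + t, f_2 := ω_0 - ω_1 + t satisfy P_IV: f_0' = f_0(f_2 - f_1) + 3a_0, f_1' = f_1(f_0 - f_2) + 3a_1, f_2' = f_2(f_1 - f_0) + 3a_2, together with f_0 + f_1 + f_2 = 3t. -/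
/-- case `n = 2`: if `ω_0, ω_1, ω_2` satisfy
`ω_i' + ω_{i+1}' = -(ω_i - ω_{i+1})(ω_i - ω_{i+1} - t) - (2a_{i+1} + a_{i+2})`
(indices mod 3) with `a_0 + a_1 + a_2 = 1`, then `f_i := ω_{i+1} - ω_{i+2} + t`
satisfy P_IV: `f_i' = f_i (f_{i+2} - f_{i+1}) + 3 a_i`, together with
`f_0 + f_1 + f_2 = 3t`. -/
theorem omega_system_to_pIV
    (ω : Fin 3 → ℂ → ℂ) (dω : Fin 3 → ℂ → ℂ) (a : Fin 3 → ℂ)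
    (ha : a 0 + a 1 + a 2 = 1)
    (hd : ∀ (i : Fin 3) (t : ℂ), HasDerivAt (ω i) (dω i t) t)
    (hsys : ∀ (i : Fin 3) (t : ℂ),
      dω i t + dω (i + 1) t
        = -(ω i t - ω (i + 1) t) * (ω i t - ω (i + 1) t - t)
          - (2 * a (i + 1) + a (i + 2))) :
    ∀ (i : Fin 3) (t : ℂ),
      HasDerivAt (fun u => ω (i + 1) u - ω (i + 2) u + u)
        ((ω (i + 1) t - ω (i + 2) t + t)
            * ((ω i t - ω (i + 1) t + t) - (ω (i + 2) t - ω i t + t)) + 3 * a i) t ∧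
      (ω 1 t - ω 2 t + t) + (ω 2 t - ω 0 t + t) + (ω 0 t - ω 1 t + t) = 3 * t := by
  intro i t
  refine ⟨?_, by ring⟩
  have h : HasDerivAt (fun u => ω (i + 1) u - ω (i + 2) u + u)
      (dω (i + 1) t - dω (i + 2) t + 1) t :=
    ((hd (i + 1) t).sub (hd (i + 2) t)).add (hasDerivAt_id t)
  convert h using 1
  have h1 := hsys i t
  have h2 := hsys (i + 2) t
  fin_cases i <;> simp_all <;> linear_combination h2 - h1 + ha
end

section
/- For n = 3, if ω_0, ω_1, ω_2, ω_3 satisfy ω_i' + ω_{i+1}' = -(ω_i - ω_{i+1})(ω_i - ω_{i+1} - t) - (3a_{i+1} + 2a_{i+2} + a_{i+3}) (indices mod 4) with a_0 + a_1 + a_2 + a_3 = 1, then f_0 := ω_1 - ω_3 + t, f_1 := ω_2 - ω_0 + t, f_2 := ω_3 - ω_1 + t, f_3 := ω_0 - ω_2 + t satisfy P_V: 2t f_0' = f_0 f_2 (f_3 - f_1) + 4a_0 f_2 + 2(1-2a_2) f_0 and its cyclic analogues, together with f_0 + f_2 = f_1 + f_3 = 2t. -/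
/-- case `n = 3`: if `ω_0, …, ω_3` satisfy
`ω_i' + ω_{i+1}' = -(ω_i - ω_{i+1})(ω_i - ω_{i+1} - t) - (3a_{i+1} + 2a_{i+2} + a_{i+3})`
(indices mod 4) with `a_0 + a_1 + a_2 + a_3 = 1`, then `f_i := ω_{i+1} - ω_{i+3} + t`
satisfy P_V: `2t f_i' = f_i f_{i+2}(f_{i+3} - f_{i+1}) + 4a_i f_{i+2} + 2(1 - 2a_{i+2}) f_i`,
together with `f_i + f_{i+2} = 2t` (in particular `f_0 + f_2 = f_1 + f_3 = 2t`). -/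
theorem omega_system_to_pV
    (ω : Fin 4 → ℂ → ℂ) (dω : Fin 4 → ℂ → ℂ) (a : Fin 4 → ℂ)
    (ha : a 0 + a 1 + a 2 + a 3 = 1)
    (hd : ∀ (i : Fin 4) (t : ℂ), HasDerivAt (ω i) (dω i t) t)
    (hsys : ∀ (i : Fin 4) (t : ℂ),
      dω i t + dω (i + 1) t
        = -(ω i t - ω (i + 1) t) * (ω i t - ω (i + 1) t - t)
          - (3 * a (i + 1) + 2 * a (i + 2) + a (i + 3))) :
    ∀ (i : Fin 4) (t : ℂ),
      HasDerivAt (fun u => ω (i + 1) u - ω (i + 3) u + u)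
        (dω (i + 1) t - dω (i + 3) t + 1) t ∧
      2 * t * (dω (i + 1) t - dω (i + 3) t + 1)
        = (ω (i + 1) t - ω (i + 3) t + t) * (ω (i + 3) t - ω (i + 1) t + t)
            * ((ω i t - ω (i + 2) t + t) - (ω (i + 2) t - ω i t + t))
          + 4 * a i * (ω (i + 3) t - ω (i + 1) t + t)
          + 2 * (1 - 2 * a (i + 2)) * (ω (i + 1) t - ω (i + 3) t + t) ∧
      (ω (i + 1) t - ω (i + 3) t + t) + (ω (i + 3) t - ω (i + 1) t + t) = 2 * t := by
  intro i t
  refine ⟨((hd (i + 1) t).sub (hd (i + 3) t)).add (hasDerivAt_id t), ?_, by ring⟩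
  have h0 : dω 0 t + dω 1 t
      = -(ω 0 t - ω 1 t) * (ω 0 t - ω 1 t - t) - (3 * a 1 + 2 * a 2 + a 3) := hsys 0 t
  have h1 : dω 1 t + dω 2 t
      = -(ω 1 t - ω 2 t) * (ω 1 t - ω 2 t - t) - (3 * a 2 + 2 * a 3 + a 0) := hsys 1 t
  have h2 : dω 2 t + dω 3 t
      = -(ω 2 t - ω 3 t) * (ω 2 t - ω 3 t - t) - (3 * a 3 + 2 * a 0 + a 1) := hsys 2 t
  have h3 : dω 3 t + dω 0 t
      = -(ω 3 t - ω 0 t) * (ω 3 t - ω 0 t - t) - (3 * a 0 + 2 * a 1 + a 2) := hsys 3 t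
  have hi : i = 0 ∨ i = 1 ∨ i = 2 ∨ i = 3 := by omega
  rcases hi with rfl | rfl | rfl | rfl
  · show 2 * t * (dω 1 t - dω 3 t + 1)
        = (ω 1 t - ω 3 t + t) * (ω 3 t - ω 1 t + t) * ((ω 0 t - ω 2 t + t) - (ω 2 t - ω 0 t + t))
          + 4 * a 0 * (ω 3 t - ω 1 t + t) + 2 * (1 - 2 * a 2) * (ω 1 t - ω 3 t + t)
    linear_combination (t - (ω 1 t - ω 3 t)) * h0 + (t + (ω 1 t - ω 3 t)) * h1
      - (t + (ω 1 t - ω 3 t)) * h2 + ((ω 1 t - ω 3 t) - t) * h3 + 2 * (ω 1 t - ω 3 t) * ha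
  · show 2 * t * (dω 2 t - dω 0 t + 1)
        = (ω 2 t - ω 0 t + t) * (ω 0 t - ω 2 t + t) * ((ω 1 t - ω 3 t + t) - (ω 3 t - ω 1 t + t))
          + 4 * a 1 * (ω 0 t - ω 2 t + t) + 2 * (1 - 2 * a 3) * (ω 2 t - ω 0 t + t)
    linear_combination (t - (ω 2 t - ω 0 t)) * h1 + (t + (ω 2 t - ω 0 t)) * h2
      - (t + (ω 2 t - ω 0 t)) * h3 + ((ω 2 t - ω 0 t) - t) * h0 + 2 * (ω 2 t - ω 0 t) * ha
  · show 2 * t * (dω 3 t - dω 1 t + 1)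
        = (ω 3 t - ω 1 t + t) * (ω 1 t - ω 3 t + t) * ((ω 2 t - ω 0 t + t) - (ω 0 t - ω 2 t + t))
          + 4 * a 2 * (ω 1 t - ω 3 t + t) + 2 * (1 - 2 * a 0) * (ω 3 t - ω 1 t + t)
    linear_combination (t - (ω 3 t - ω 1 t)) * h2 + (t + (ω 3 t - ω 1 t)) * h3
      - (t + (ω 3 t - ω 1 t)) * h0 + ((ω 3 t - ω 1 t) - t) * h1 + 2 * (ω 3 t - ω 1 t) * ha
  · show 2 * t * (dω 0 t - dω 2 t + 1)
        = (ω 0 t - ω 2 t + t) * (ω 2 t - ω 0 t + t) * ((ω 3 t - ω 1 t + t) - (ω 1 t - ω 3 t + t))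
          + 4 * a 3 * (ω 2 t - ω 0 t + t) + 2 * (1 - 2 * a 1) * (ω 0 t - ω 2 t + t)
    linear_combination (t - (ω 0 t - ω 2 t)) * h3 + (t + (ω 0 t - ω 2 t)) * h0
      - (t + (ω 0 t - ω 2 t)) * h1 + ((ω 0 t - ω 2 t) - t) * h2 + 2 * (ω 0 t - ω 2 t) * ha
end

section
/- Consider the 2×2 matrix Riccati linearization of the H1 equation: if vectors ψ and ψ_ī satisfy ψ_ī = [[1, u],[0, 1]]·[[0, μ - α],[1, -u_ī]]·ψ and we write v = F/G where ψ = (F, G)ᵀ, then v and its shift v_ī = F_ī/G_ī satisfy the Riccati-type relation (u - v_ī)(u_ī - v) + α - μ = 0. -/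
/-- the 2×2 matrix linearization of the H1 Riccati relation.
If `ψ_ī = [[1,u],[0,1]]·[[0, μ-α],[1, -u_ī]]·ψ` with `ψ = (F,G)ᵀ`, `G ≠ 0`, and the
second component of `ψ_ī` nonzero, then `v = F/G` and `v_ī = F_ī/G_ī` satisfy
`(u - v_ī)(u_ī - v) + α - μ = 0`. -/
theorem riccati_linearization (u uI α μ F G : ℂ) (hG : G ≠ 0)
    (hGI : (((!![1, u; 0, 1] * !![0, μ - α; 1, -uI]).mulVec ![F, G]) 1) ≠ 0) :
    (u - ((!![1, u; 0, 1] * !![0, μ - α; 1, -uI]).mulVec ![F, G]) 0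
          / ((!![1, u; 0, 1] * !![0, μ - α; 1, -uI]).mulVec ![F, G]) 1)
        * (uI - F / G) + α - μ = 0 := by
  simp only [Matrix.mulVec, Matrix.mul_apply, Fin.sum_univ_two, dotProduct] at hGI ⊢
  norm_num [Matrix.cons_val_zero, Matrix.cons_val_one, Matrix.head_cons, Matrix.head_fin_const] at hGI ⊢
  field_simp
  ring
end

section
/- Compatibility of the Lax matrices implies the lattice H1 equation: let L_i(u, u_ī; α) = [[1, u],[0,1]]·[[0, μ - α],[1, -u_ī]]. Then the compatibility condition L_j(u_ī, u_īj̄; β)·L_i(u, u_ī; α) = L_i(u_j̄, u_īj̄; α)·L_j(u, u_j̄; β), required to hold for all values of the spectral parameter μ, holds if and only if (u - u_īj̄)(u_ī - u_j̄) + α - β = 0 (or u_ī = u_j̄ and α = β). -/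
/-- The Lax matrix `L(x, y; c) = [[1,x],[0,1]]·[[0, μ-c],[1, -y]]` of the lattice
potential KdV (H1) equation, with spectral parameter `μ`. -/
noncomputable def laxL (x y c μ : ℂ) : Matrix (Fin 2) (Fin 2) ℂ :=
  !![1, x; 0, 1] * !![0, μ - c; 1, -y]

theorem laxL_eq (x y c μ : ℂ) : laxL x y c μ = !![x, μ - c - x * y; 1, -y] := by
  ext i j
  fin_cases i <;> fin_cases j <;> simp [laxL]; ring

theorem laxL_mul_sub_laxL_mul (u uI uJ uIJ α β μ : ℂ) :
    laxL uI uIJ β μ * laxL u uI α μ - laxL uJ uIJ α μ * laxL u uJ β μ =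
      ((u - uIJ) * (uI - uJ) + α - β) • !![1, -(uI + uJ); 0, -1] := by
  ext i j
  fin_cases i <;> fin_cases j <;> simp [laxL_eq] <;> ring

/-- the compatibility condition
`L_j(u_ī, u_īj̄; β) L_i(u, u_ī; α) = L_i(u_j̄, u_īj̄; α) L_j(u, u_j̄; β)`, as an identity
in the spectral parameter `μ`, holds if and only if the lattice H1 equation
`(u - u_īj̄)(u_ī - u_j̄) + α - β = 0` holds (or `u_ī = u_j̄` and `α = β`). -/
theorem lax_compatibility_iff_H1 (u uI uJ uIJ α β : ℂ) :
    (∀ μ : ℂ, laxL uI uIJ β μ * laxL u uI α μ = laxL uJ uIJ α μ * laxL u uJ β μ)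
      ↔ ((u - uIJ) * (uI - uJ) + α - β = 0 ∨ (uI = uJ ∧ α = β)) := by
  have hdefect : !![(1 : ℂ), -(uI + uJ); 0, -1] ≠ 0 := fun h =>
    one_ne_zero (congrFun (congrFun h 0) 0)
  have hdegenerate : uI = uJ ∧ α = β → (u - uIJ) * (uI - uJ) + α - β = 0 := by
    rintro ⟨rfl, rfl⟩
    ring
  have hcompat (μ : ℂ) : laxL uI uIJ β μ * laxL u uI α μ = laxL uJ uIJ α μ * laxL u uJ β μ ↔
      (u - uIJ) * (uI - uJ) + α - β = 0 := by
    rw [← sub_eq_zero, laxL_mul_sub_laxL_mul, smul_eq_zero, or_iff_left hdefect]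
  rw [forall_congr' hcompat, forall_const, or_iff_left_of_imp hdegenerate]
end

section
/- For the P_V Hamiltonian relation: if f_0+f_2 = f_1+f_3 = 2t, a_0+a_1+a_2+a_3 = 1, and the f_i satisfy the P_V system, then the function c := ω_0 - (16 h_V - t⁴ - 6t² - 1)/(8t) is constant, where ω_0 satisfies the ODE 8t² ω_0' = -(4(a_1+a_3)² - 1 + 2(3+2a_1+4a_2-2a_3)t² + 3t⁴ - 8t(a_3 f_2 + a_2 f_3)) - (4(a_1+a_3-t²) f_2 f_3 - 2t(f_2 - f_3) f_2 f_3 + f_2² f_3²); equivalently, the derivative of (16 h_V - t⁴ - 6t² - 1)/(8t) equals the stated right-hand side divided by 8t², where h_V = (1/16)(f_0 f_1 f_2 f_3 - (a_1+2a_2-a_3) f_0 f_1 - (a_1+2a_2+3a_3) f_1 f_2 + (3a_1+2a_2+a_3) f_2 f_3 - (a_1-2a_2-a_3) f_3 f_0 + 4(a_1+a_3)²). -/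
/-! The constraints `f₀ + f₂ = f₁ + f₃ = 2t` make `f₀, f₁` (and `a₀`) affine in the other
data, so `ω₀` is a function of `t, f₂, f₃` alone. Writing `ω₀ = N / (8t)`, one has `8t² ω₀' = t N' - N`, and after
substituting the `P_V` equations for `2t f₂'` and `2t f₃'` this becomes a polynomial
identity in `t, f₂, f₃`. -/

/-- The `P_V` Hamiltonian `h_V`. -/
noncomputable def hamiltonianV (a1 a2 a3 x0 x1 x2 x3 : ℂ) : ℂ :=
  (1 / 16) * (x0 * x1 * x2 * x3
    - (a1 + 2 * a2 - a3) * (x0 * x1)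
    - (a1 + 2 * a2 + 3 * a3) * (x1 * x2)
    + (3 * a1 + 2 * a2 + a3) * (x2 * x3)
    - (a1 - 2 * a2 - a3) * (x3 * x0)
    + 4 * (a1 + a3) ^ 2)

noncomputable def hamiltonianVDeriv (a1 a2 a3 x0 x1 x2 x3 d0 d1 d2 d3 : ℂ) : ℂ :=
  (1 / 16) * ((x1 * x2 * x3 - (a1 + 2 * a2 - a3) * x1 - (a1 - 2 * a2 - a3) * x3) * d0
    + (x0 * x2 * x3 - (a1 + 2 * a2 - a3) * x0 - (a1 + 2 * a2 + 3 * a3) * x2) * d1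
    + (x0 * x1 * x3 - (a1 + 2 * a2 + 3 * a3) * x1 + (3 * a1 + 2 * a2 + a3) * x3) * d2
    + (x0 * x1 * x2 + (3 * a1 + 2 * a2 + a3) * x2 - (a1 - 2 * a2 - a3) * x0) * d3)

theorem hasDerivAt_hamiltonianV {a1 a2 a3 d0 d1 d2 d3 t : ℂ} {f0 f1 f2 f3 : ℂ → ℂ}
    (h0 : HasDerivAt f0 d0 t) (h1 : HasDerivAt f1 d1 t)
    (h2 : HasDerivAt f2 d2 t) (h3 : HasDerivAt f3 d3 t) :
    HasDerivAt (fun u => hamiltonianV a1 a2 a3 (f0 u) (f1 u) (f2 u) (f3 u))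
      (hamiltonianVDeriv a1 a2 a3 (f0 t) (f1 t) (f2 t) (f3 t) d0 d1 d2 d3) t := by
  have h01 := h0.mul h1
  have h := ((((((h01.mul h2).mul h3).sub (h01.const_mul (a1 + 2 * a2 - a3))).sub
      ((h1.mul h2).const_mul (a1 + 2 * a2 + 3 * a3))).add
      ((h2.mul h3).const_mul (3 * a1 + 2 * a2 + a3))).sub
      ((h3.mul h0).const_mul (a1 - 2 * a2 - a3))).add_const (4 * (a1 + a3) ^ 2)
  refine (h.const_mul (1 / 16 : ℂ)).congr_deriv ?_
  simp only [hamiltonianVDeriv, Pi.mul_apply]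
  ring

theorem HasDerivAt.of_add_eq_const_mul {𝕜 : Type*} [NontriviallyNormedField 𝕜]
    {f g : 𝕜 → 𝕜} {c g' t : 𝕜}
    (hfg : ∀ u, f u + g u = c * u) (hg : HasDerivAt g g' t) : HasDerivAt f (c - g') t := by
  have hf : f = fun u => c * u - g u := funext fun u => eq_sub_of_add_eq (hfg u)
  rw [hf]
  exact (((hasDerivAt_id t).const_mul c).sub hg).congr_deriv (by rw [mul_one])

theorem HasDerivAt.div_const_mul_id {𝕜 : Type*} [NontriviallyNormedField 𝕜]
    {N : 𝕜 → 𝕜} {N' c t : 𝕜} (hN : HasDerivAt N N' t)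
    (hc : c ≠ 0) (ht : t ≠ 0) :
    HasDerivAt (fun u => N u / (c * u)) ((t * N' - N t) / (c * t ^ 2)) t := by
  have hden : HasDerivAt (fun u => c * u) c t := by
    simpa using (hasDerivAt_id t).const_mul c
  refine (hN.div hden (mul_ne_zero hc ht)).congr_deriv ?_
  field_simp

theorem pV_omega_identity {a0 a1 a2 a3 t x0 x1 x2 x3 d2 d3 : ℂ}
    (h02 : x0 + x2 = 2 * t) (h13 : x1 + x3 = 2 * t) (ha : a0 + a1 + a2 + a3 = 1)
    (hp2 : 2 * t * d2 = x2 * x0 * (x1 - x3) + 4 * a2 * x0 + 2 * (1 - 2 * a0) * x2)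
    (hp3 : 2 * t * d3 = x3 * x1 * (x2 - x0) + 4 * a3 * x1 + 2 * (1 - 2 * a1) * x3) :
    t * (16 * hamiltonianVDeriv a1 a2 a3 x0 x1 x2 x3 (2 - d2) (2 - d3) d2 d3
        - 4 * t ^ 3 - 6 * (2 * t))
      - (16 * hamiltonianV a1 a2 a3 x0 x1 x2 x3 - t ^ 4 - 6 * t ^ 2 - 1)
      = -(4 * (a1 + a3) ^ 2 - 1 + 2 * (3 + 2 * a1 + 4 * a2 - 2 * a3) * t ^ 2
          + 3 * t ^ 4 - 8 * t * (a3 * x2 + a2 * x3))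
        - (4 * (a1 + a3 - t ^ 2) * (x2 * x3) - 2 * t * (x2 - x3) * (x2 * x3)
          + x2 ^ 2 * x3 ^ 2) := by
  obtain rfl : x0 = 2 * t - x2 := eq_sub_of_add_eq h02
  obtain rfl : x1 = 2 * t - x3 := eq_sub_of_add_eq h13
  obtain rfl : a0 = 1 - a1 - a2 - a3 := by linear_combination ha
  simp only [hamiltonianV, hamiltonianVDeriv]
  -- the coefficients are those of `t * d2` and `t * d3` on the left-hand side, halved
  linear_combination
    ((2 * t - x3) * (2 * t - x2) * x3 - (a1 + 2 * a2 + 3 * a3) * (2 * t - x3)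
        + (3 * a1 + 2 * a2 + a3) * x3
      - ((2 * t - x3) * x2 * x3 - (a1 + 2 * a2 - a3) * (2 * t - x3)
        - (a1 - 2 * a2 - a3) * x3)) / 2 * hp2
    + ((2 * t - x2) * (2 * t - x3) * x2 + (3 * a1 + 2 * a2 + a3) * x2
        - (a1 - 2 * a2 - a3) * (2 * t - x2)
      - ((2 * t - x2) * x2 * x3 - (a1 + 2 * a2 - a3) * (2 * t - x2)
        - (a1 + 2 * a2 + 3 * a3) * x2)) / 2 * hp3

theorem pV_hamiltonian_deriv_general (a0 a1 a2 a3 : ℂ) (f0 f1 f2 f3 d2 d3 : ℂ → ℂ)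
    (hd2 : ∀ t : ℂ, t ≠ 0 → HasDerivAt f2 (d2 t) t)
    (hd3 : ∀ t : ℂ, t ≠ 0 → HasDerivAt f3 (d3 t) t)
    (hp2 : ∀ t : ℂ, t ≠ 0 →
      2 * t * d2 t = f2 t * f0 t * (f1 t - f3 t) + 4 * a2 * f0 t + 2 * (1 - 2 * a0) * f2 t)
    (hp3 : ∀ t : ℂ, t ≠ 0 →
      2 * t * d3 t = f3 t * f1 t * (f2 t - f0 t) + 4 * a3 * f1 t + 2 * (1 - 2 * a1) * f3 t)
    (hc02 : ∀ t : ℂ, f0 t + f2 t = 2 * t)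
    (hc13 : ∀ t : ℂ, f1 t + f3 t = 2 * t)
    (ha : a0 + a1 + a2 + a3 = 1) :
    ∀ t : ℂ, t ≠ 0 →
      HasDerivAt
        (fun u =>
          (16 * ((1 / 16) * (f0 u * f1 u * f2 u * f3 u
              - (a1 + 2 * a2 - a3) * (f0 u * f1 u)
              - (a1 + 2 * a2 + 3 * a3) * (f1 u * f2 u)
              + (3 * a1 + 2 * a2 + a3) * (f2 u * f3 u)
              - (a1 - 2 * a2 - a3) * (f3 u * f0 u)
              + 4 * (a1 + a3) ^ 2))
            - u ^ 4 - 6 * u ^ 2 - 1) / (8 * u))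
        ((-(4 * (a1 + a3) ^ 2 - 1 + 2 * (3 + 2 * a1 + 4 * a2 - 2 * a3) * t ^ 2
              + 3 * t ^ 4 - 8 * t * (a3 * f2 t + a2 * f3 t))
            - (4 * (a1 + a3 - t ^ 2) * (f2 t * f3 t)
              - 2 * t * (f2 t - f3 t) * (f2 t * f3 t)
              + (f2 t) ^ 2 * (f3 t) ^ 2)) / (8 * t ^ 2)) t := by
  intro t ht
  have hH := hasDerivAt_hamiltonianV (a1 := a1) (a2 := a2) (a3 := a3)
    (HasDerivAt.of_add_eq_const_mul hc02 (hd2 t ht))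
    (HasDerivAt.of_add_eq_const_mul hc13 (hd3 t ht)) (hd2 t ht) (hd3 t ht)
  have hN := (((hH.const_mul 16).sub (hasDerivAt_pow 4 t)).sub
    ((hasDerivAt_pow 2 t).const_mul 6)).sub_const 1
  refine (hN.div_const_mul_id (by norm_num : (8 : ℂ) ≠ 0) ht).congr_deriv ?_
  rw [← pV_omega_identity (hc02 t) (hc13 t) ha (hp2 t ht) (hp3 t ht)]
  norm_num

/-- along solutions of the P_V system (on the domain `t ≠ 0`, with the
constraints `f_0 + f_2 = f_1 + f_3 = 2t` and `a_0 + a_1 + a_2 + a_3 = 1`), the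
function `ω_0 := (16 h_V - t⁴ - 6t² - 1)/(8t)` satisfies
`8t² ω_0' = -(4(a_1+a_3)² - 1 + 2(3+2a_1+4a_2-2a_3)t² + 3t⁴ - 8t(a_3 f_2 + a_2 f_3))
 - (4(a_1+a_3-t²) f_2 f_3 - 2t(f_2 - f_3) f_2 f_3 + f_2² f_3²)`,
where `h_V` is the P_V Hamiltonian. -/
theorem pV_hamiltonian_deriv (a0 a1 a2 a3 : ℂ) (f0 f1 f2 f3 d0 d1 d2 d3 : ℂ → ℂ)
    (hd0 : ∀ t : ℂ, t ≠ 0 → HasDerivAt f0 (d0 t) t)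
    (hd1 : ∀ t : ℂ, t ≠ 0 → HasDerivAt f1 (d1 t) t)
    (hd2 : ∀ t : ℂ, t ≠ 0 → HasDerivAt f2 (d2 t) t)
    (hd3 : ∀ t : ℂ, t ≠ 0 → HasDerivAt f3 (d3 t) t)
    (hp0 : ∀ t : ℂ, t ≠ 0 →
      2 * t * d0 t = f0 t * f2 t * (f3 t - f1 t) + 4 * a0 * f2 t + 2 * (1 - 2 * a2) * f0 t)
    (hp1 : ∀ t : ℂ, t ≠ 0 →
      2 * t * d1 t = f1 t * f3 t * (f0 t - f2 t) + 4 * a1 * f3 t + 2 * (1 - 2 * a3) * f1 t)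
    (hp2 : ∀ t : ℂ, t ≠ 0 →
      2 * t * d2 t = f2 t * f0 t * (f1 t - f3 t) + 4 * a2 * f0 t + 2 * (1 - 2 * a0) * f2 t)
    (hp3 : ∀ t : ℂ, t ≠ 0 →
      2 * t * d3 t = f3 t * f1 t * (f2 t - f0 t) + 4 * a3 * f1 t + 2 * (1 - 2 * a1) * f3 t)
    (hc02 : ∀ t : ℂ, f0 t + f2 t = 2 * t)
    (hc13 : ∀ t : ℂ, f1 t + f3 t = 2 * t)
    (ha : a0 + a1 + a2 + a3 = 1) :
    ∀ t : ℂ, t ≠ 0 →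
      HasDerivAt
        (fun u =>
          (16 * ((1 / 16) * (f0 u * f1 u * f2 u * f3 u
              - (a1 + 2 * a2 - a3) * (f0 u * f1 u)
              - (a1 + 2 * a2 + 3 * a3) * (f1 u * f2 u)
              + (3 * a1 + 2 * a2 + a3) * (f2 u * f3 u)
              - (a1 - 2 * a2 - a3) * (f3 u * f0 u)
              + 4 * (a1 + a3) ^ 2))
            - u ^ 4 - 6 * u ^ 2 - 1) / (8 * u))
        ((-(4 * (a1 + a3) ^ 2 - 1 + 2 * (3 + 2 * a1 + 4 * a2 - 2 * a3) * t ^ 2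
              + 3 * t ^ 4 - 8 * t * (a3 * f2 t + a2 * f3 t))
            - (4 * (a1 + a3 - t ^ 2) * (f2 t * f3 t)
              - 2 * t * (f2 t - f3 t) * (f2 t * f3 t)
              + (f2 t) ^ 2 * (f3 t) ^ 2)) / (8 * t ^ 2)) t :=
  pV_hamiltonian_deriv_general a0 a1 a2 a3 f0 f1 f2 f3 d2 d3 hd2 hd3 hp2 hp3 hc02 hc13 ha
end
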